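/- arXiv:1311.6683 — 2 statements merged into one kernel-verified Lean document; each statement's English description precedes it below -/
import Mathlib

section
/- Let p be a probability distribution on ℕ with p(0)>0, p(0)+p(1)<1, and μ(p)<1, and let g be its generating function with radius of convergence ρ. If ρ = +∞, or if ρ < +∞ and g'(ρ) ≥ 1, then for every A ⊆ ℕ with p(A)>0 there exists θ ∈ I_A with μ(p_{A,θ}) = 1 (i.e., p is generic for A). -/
/-!
Write `g(θ) = ∑ p_k θ^k` and `h(θ) = θ g'(θ) = ∑ k p_k θ^k`. For `θ > 0` in the domain of
convergence, `p_{A,θ}` always has total mass `1`, its weights are nonnegative as soon as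
`g(θ) ≤ θ`, and its mean is continuous in `θ` and equals `μ(p) < 1` at `θ = 1`.
The hypothesis on `ρ` provides `t ≥ 1` with `h(t) ≥ t`; as `h(1) = μ(p) < 1`, `h` has a fixed
point `t ≥ 1`. The mean value inequality `t (g(t) - g(1)) ≤ h(t) (t - 1)` gives `g(t) ≤ t`, so by
convexity `g` stays below the diagonal on `[1, t]`, and the mean of `p_{A,t}` is at least
`h(t) / t = 1`. The intermediate value theorem on `[1, t]` then yields the required `θ`.
-/

open scoped Classical

/-- The normalizing constant `c_A(θ)`. -/
noncomputable def cA (p : ℕ → ℝ) (A : Set ℕ) (θ : ℝ) : ℝ :=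
  (θ - ∑' k : ℕ, (Aᶜ).indicator (fun k => θ ^ k * p k) k) /
    (θ * ∑' k : ℕ, A.indicator (fun k => θ ^ k * p k) k)

/-- The modified offspring distribution `p_{A,θ}`. -/
noncomputable def pMod (p : ℕ → ℝ) (A : Set ℕ) (θ : ℝ) : ℕ → ℝ :=
  fun k => if k ∈ A then cA p A θ * θ ^ k * p k else θ ^ ((k : ℤ) - 1) * p k

/-- `I_A`: the set of `θ > 0` for which `p_{A,θ}` is a probability distribution. -/
def IA (p : ℕ → ℝ) (A : Set ℕ) : Set ℝ :=
  {θ | 0 < θ ∧ (∀ k, 0 ≤ pMod p A θ k) ∧ ∑' k, pMod p A θ k = 1}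

open Set Filter Topology

lemma summable_of_tsum_ne_zero {f : ℕ → ℝ} (h : ∑' k, f k ≠ 0) : Summable f :=
  not_not.1 fun hf => h (tsum_eq_zero_of_not_summable hf)

lemma mul_pow_sub_pow_le (k : ℕ) {x y : ℝ} (hx : 0 ≤ x) (hxy : x ≤ y) :
    y * (y ^ k - x ^ k) ≤ k * y ^ k * (y - x) := by
  induction k with
  | zero => simp
  | succ n ih =>
    have hy : 0 ≤ y := hx.trans hxy
    have h1 := mul_le_mul_of_nonneg_left ih hy
    have h2 := mul_le_mul_of_nonneg_left (mul_le_mul_of_nonneg_right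
      (pow_le_pow_left₀ hx hxy n) (sub_nonneg.2 hxy)) hy
    rw [pow_succ, pow_succ]
    push_cast
    nlinarith

noncomputable def genFun (a : ℕ → ℝ) (θ : ℝ) : ℝ := ∑' k, a k * θ ^ k

namespace genFun

variable {a b : ℕ → ℝ} {C r s t x y θ : ℝ}

lemma summable_of_le (hb : 0 ≤ b) (hba : b ≤ a) (hr : 0 ≤ r) (hrt : r ≤ t)
    (ha : Summable fun k => a k * t ^ k) : Summable fun k => b k * r ^ k :=
  ha.of_nonneg_of_le (fun k => mul_nonneg (hb k) (pow_nonneg hr k))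
    (fun k => mul_le_mul (hba k) (pow_le_pow_left₀ hr hrt k) (pow_nonneg hr k)
      ((hb k).trans (hba k)))

lemma summable_natCast_mul_of_lt (ha : 0 ≤ a) (hr : 0 ≤ r) (hrt : r < t)
    (hs : Summable fun k => a k * t ^ k) : Summable fun k : ℕ => (k : ℝ) * a k * r ^ k := by
  have ht : 0 < t := hr.trans_lt hrt
  have hq : ‖r / t‖ < 1 := by
    rw [Real.norm_eq_abs, abs_of_nonneg (div_nonneg hr ht.le)]
    exact (div_lt_one ht).2 hrt
  have hq' : Summable fun k : ℕ => (k : ℝ) * (r / t) ^ k := by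
    simpa using summable_pow_mul_geometric_of_norm_lt_one 1 hq
  -- `k (r/t)^k` is bounded by its sum `C`, and `k a_k r^k = k (r/t)^k * a_k t^k`.
  set C := ∑' k : ℕ, (k : ℝ) * (r / t) ^ k
  have hC (k : ℕ) : (k : ℝ) * (r / t) ^ k ≤ C :=
    hq'.le_tsum k fun j _ => mul_nonneg j.cast_nonneg (pow_nonneg (div_nonneg hr ht.le) j)
  refine (hs.mul_left C).of_nonneg_of_le
    (fun k => mul_nonneg (mul_nonneg k.cast_nonneg (ha k)) (pow_nonneg hr k)) fun k => ?_
  calc (k : ℝ) * a k * r ^ k = (k * (r / t) ^ k) * (a k * t ^ k) := by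
        rw [div_pow]; field_simp
    _ ≤ C * (a k * t ^ k) :=
        mul_le_mul_of_nonneg_right (hC k) (mul_nonneg (ha k) (pow_nonneg ht.le k))

lemma summable_of_summable_natCast_mul (ha : 0 ≤ a) (hr : 0 ≤ r)
    (hs : Summable fun k : ℕ => (k : ℝ) * a k * r ^ k) : Summable fun k => a k * r ^ k := by
  rw [← summable_nat_add_iff 1] at hs ⊢
  refine hs.of_nonneg_of_le (fun n => mul_nonneg (ha _) (pow_nonneg hr _)) fun n => ?_
  have h1 : (1 : ℝ) ≤ ((n + 1 : ℕ) : ℝ) := by exact_mod_cast n.succ_pos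
  nlinarith [mul_nonneg (ha (n + 1)) (pow_nonneg hr (n + 1))]

lemma add (ha : Summable fun k => a k * θ ^ k) (hb : Summable fun k => b k * θ ^ k) :
    genFun (a + b) θ = genFun a θ + genFun b θ := by
  simp only [genFun, Pi.add_apply, add_mul]
  exact ha.tsum_add hb

lemma nonneg (ha : 0 ≤ a) (hθ : 0 ≤ θ) : 0 ≤ genFun a θ :=
  tsum_nonneg fun k => mul_nonneg (ha k) (pow_nonneg hθ k)

lemma pos (ha : 0 ≤ a) (hθ : 0 < θ) (hs : Summable fun k => a k * θ ^ k) {k : ℕ}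
    (hk : 0 < a k) : 0 < genFun a θ :=
  hs.tsum_pos (fun k => mul_nonneg (ha k) (pow_nonneg hθ.le k)) k (mul_pos hk (pow_pos hθ k))

lemma one : genFun a 1 = ∑' k, a k := by simp [genFun]

lemma continuousOn (ha : 0 ≤ a) (hs : Summable fun k => a k * t ^ k) :
    ContinuousOn (genFun a) (Icc 0 t) := by
  refine continuousOn_tsum (fun k => (continuous_const.mul (continuous_pow k)).continuousOn) hs
    fun k θ hθ => ?_
  rw [Real.norm_eq_abs, abs_of_nonneg (mul_nonneg (ha k) (pow_nonneg hθ.1 k))]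
  exact mul_le_mul_of_nonneg_left (pow_le_pow_left₀ hθ.1 hθ.2 k) (ha k)

lemma convexOn (ha : 0 ≤ a) (hs : Summable fun k => a k * t ^ k) :
    ConvexOn ℝ (Icc 0 t) (genFun a) := by
  refine ⟨convex_Icc 0 t, fun x hx y hy u v hu hv huv => ?_⟩
  have hsx := summable_of_le ha le_rfl hx.1 hx.2 hs
  have hsy := summable_of_le ha le_rfl hy.1 hy.2 hs
  simp only [smul_eq_mul, genFun, ← tsum_mul_left]
  rw [← (hsx.mul_left u).tsum_add (hsy.mul_left v)]
  refine (summable_of_le ha le_rfl (convex_Icc 0 t hx hy hu hv huv).1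
    (convex_Icc 0 t hx hy hu hv huv).2 hs).tsum_le_tsum (fun k => ?_)
    ((hsx.mul_left u).add (hsy.mul_left v))
  have := (convexOn_pow k).2 (mem_Ici.2 hx.1) (mem_Ici.2 hy.1) hu hv huv
  simp only [smul_eq_mul] at this
  nlinarith [mul_le_mul_of_nonneg_left this (ha k)]

lemma summable_indicator (hs : Summable fun k => a k * θ ^ k)
    (B : Set ℕ) : Summable fun k => B.indicator a k * θ ^ k :=
  (hs.indicator B).congr fun _ => Set.indicator_mul_left B a _

lemma indicator_add_compl (hs : Summable fun k => a k * θ ^ k)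
    (B : Set ℕ) : genFun (B.indicator a) θ + genFun (Bᶜ.indicator a) θ = genFun a θ := by
  rw [← add (summable_indicator hs B) (summable_indicator hs Bᶜ),
    Set.indicator_self_add_compl]

lemma mul_sub_le (ha : 0 ≤ a) (hx : 0 ≤ x) (hxy : x ≤ y)
    (hs : Summable fun k : ℕ => (k : ℝ) * a k * y ^ k) :
    y * (genFun a y - genFun a x) ≤ genFun (fun k : ℕ => (k : ℝ) * a k) y * (y - x) := by
  have hsy := summable_of_summable_natCast_mul ha (hx.trans hxy) hs
  have hsx := summable_of_le ha le_rfl hx hxy hsy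
  simp only [genFun, ← tsum_mul_left, ← tsum_mul_right, ← hsy.tsum_sub hsx]
  refine ((hsy.sub hsx).mul_left y).tsum_le_tsum (fun k => ?_) (hs.mul_right _)
  nlinarith [mul_le_mul_of_nonneg_left (mul_pow_sub_pow_le k hx hxy) (ha k)]

lemma summable_of_le_on_Ioo (ha : 0 ≤ a) (hs : 0 ≤ s) (hst : s < t)
    (h : ∀ r ∈ Ioo s t, Summable (fun k => a k * r ^ k) ∧ genFun a r ≤ C) :
    Summable fun k => a k * t ^ k := by
  -- each partial sum at `t` is a limit of partial sums at `r ↑ t`, which are bounded by `C`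
  refine summable_of_sum_le (c := C)
    (fun k => mul_nonneg (ha k) (pow_nonneg (hs.trans hst.le) k)) fun F => ?_
  have hlim : Tendsto (fun r => ∑ k ∈ F, a k * r ^ k) (𝓝[<] t) (𝓝 (∑ k ∈ F, a k * t ^ k)) :=
    ((continuous_finsetSum F fun k _ => continuous_const.mul (continuous_pow k)).tendsto t)
      |>.mono_left nhdsWithin_le_nhds
  refine le_of_tendsto hlim ?_
  filter_upwards [Ioo_mem_nhdsLT hst] with r hr
  exact ((h r hr).1.sum_le_tsum F fun k _ => mul_nonneg (ha k)
    (pow_nonneg (hs.trans hr.1.le) k)).trans (h r hr).2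

end genFun

lemma natCast_mul_nonneg {p : ℕ → ℝ} (hp : 0 ≤ p) : 0 ≤ fun k : ℕ => (k : ℝ) * p k :=
  fun k => mul_nonneg k.cast_nonneg (hp k)

section Modified

variable {p : ℕ → ℝ} {A : Set ℕ} {θ : ℝ}

lemma cA_eq_genFun :
    cA p A θ = (θ - genFun (Aᶜ.indicator p) θ) / (θ * genFun (A.indicator p) θ) := by
  simp only [cA, genFun, Set.indicator_mul_right]
  simp only [mul_comm]

lemma pMod_eq (hθ : θ ≠ 0) (k : ℕ) :
    pMod p A θ k = cA p A θ * (A.indicator p k * θ ^ k) + Aᶜ.indicator p k * θ ^ k / θ := by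
  by_cases hk : k ∈ A
  · simp [pMod, hk]
    ring
  · simp only [pMod, hk, if_false, Set.indicator_of_notMem hk,
      Set.indicator_of_mem (Set.mem_compl hk)]
    rw [zpow_sub₀ hθ, zpow_one, zpow_natCast]
    ring

lemma pMod_nonneg (hp : 0 ≤ p) (hθ : 0 < θ) (hc : 0 ≤ cA p A θ) (k : ℕ) : 0 ≤ pMod p A θ k := by
  rw [pMod_eq hθ.ne']
  have (B : Set ℕ) : 0 ≤ B.indicator p k * θ ^ k :=
    mul_nonneg (Set.indicator_nonneg (fun j _ => hp j) k) (pow_nonneg hθ.le k)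
  exact add_nonneg (mul_nonneg hc (this A)) (div_nonneg (this Aᶜ) hθ.le)

lemma tsum_mul_pMod (w : ℕ → ℝ) (hθ : θ ≠ 0) (hs : Summable fun k => w k * p k * θ ^ k) :
    ∑' k, w k * pMod p A θ k = cA p A θ * genFun (A.indicator fun k => w k * p k) θ
      + genFun (Aᶜ.indicator fun k => w k * p k) θ / θ := by
  have hA := genFun.summable_indicator hs A
  have hAc := genFun.summable_indicator hs Aᶜ
  simp only [genFun, ← tsum_mul_left, ← tsum_div_const]
  rw [← (hA.mul_left _).tsum_add (hAc.div_const θ)]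
  refine tsum_congr fun k => ?_
  simp only [pMod_eq hθ, Set.indicator_mul_right]
  ring

lemma genFun_indicator_pos (hp : 0 ≤ p) (hA : 0 < ∑' k, A.indicator p k) (hθ : 0 < θ)
    (hs : Summable fun k => p k * θ ^ k) : 0 < genFun (A.indicator p) θ := by
  obtain ⟨k, hk⟩ : ∃ k, A.indicator p k ≠ 0 := by
    by_contra! h
    simp [h] at hA
  have hnn : 0 ≤ A.indicator p := Set.indicator_nonneg fun j _ => hp j
  exact genFun.pos hnn hθ (genFun.summable_indicator hs A) ((hnn k).lt_of_ne' hk)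

lemma mem_IA (hp : 0 ≤ p) (hθ : 0 < θ) (hs : Summable fun k => p k * θ ^ k)
    (hA : 0 < genFun (A.indicator p) θ) (hG : genFun p θ ≤ θ) : θ ∈ IA p A := by
  have hsplit := genFun.indicator_add_compl hs A
  have hc : 0 ≤ cA p A θ := by
    rw [cA_eq_genFun]
    exact div_nonneg (by linarith) (by positivity)
  refine ⟨hθ, pMod_nonneg hp hθ hc, ?_⟩
  have h := tsum_mul_pMod (A := A) 1 hθ.ne' (by simpa using hs)
  simp only [Pi.one_apply, one_mul] at h
  rw [h, cA_eq_genFun]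
  field_simp
  ring

end Modified

noncomputable def modMean (p : ℕ → ℝ) (A : Set ℕ) (θ : ℝ) : ℝ :=
  cA p A θ * genFun (A.indicator fun k : ℕ => (k : ℝ) * p k) θ
    + genFun (Aᶜ.indicator fun k : ℕ => (k : ℝ) * p k) θ / θ

section Mean

variable {p : ℕ → ℝ} {A : Set ℕ} {t : ℝ}

lemma tsum_natCast_mul_pMod {θ : ℝ} (hθ : θ ≠ 0)
    (hs : Summable fun k : ℕ => (k : ℝ) * p k * θ ^ k) :
    ∑' k : ℕ, (k : ℝ) * pMod p A θ k = modMean p A θ :=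
  tsum_mul_pMod _ hθ hs

lemma continuousOn_modMean (hp : 0 ≤ p) (ht : 0 ≤ t)
    (hs : Summable fun k : ℕ => (k : ℝ) * p k * t ^ k)
    (hA : ∀ θ ∈ Icc 1 t, 0 < genFun (A.indicator p) θ) :
    ContinuousOn (modMean p A) (Icc 1 t) := by
  have hsG := genFun.summable_of_summable_natCast_mul hp ht hs
  have hsub : Icc 1 t ⊆ Icc 0 t := Icc_subset_Icc_left zero_le_one
  have hcont {q : ℕ → ℝ} (hq : 0 ≤ q) (hqs : Summable fun k => q k * t ^ k) (B : Set ℕ) :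
      ContinuousOn (genFun (B.indicator q)) (Icc 1 t) :=
    (genFun.continuousOn (Set.indicator_nonneg (fun k _ => hq k))
      (genFun.summable_indicator hqs B)).mono hsub
  have hkp := natCast_mul_nonneg hp
  have hpos : ∀ θ ∈ Icc (1 : ℝ) t, θ ≠ 0 := fun θ hθ => (zero_lt_one.trans_le hθ.1).ne'
  have hcA : ContinuousOn (fun θ => cA p A θ) (Icc 1 t) := by
    simp only [cA_eq_genFun]
    exact (continuousOn_id.sub (hcont hp hsG Aᶜ)).div (continuousOn_id.mul (hcont hp hsG A))
      fun θ hθ => mul_ne_zero (hpos θ hθ) (hA θ hθ).ne'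
  exact (hcA.mul (hcont hkp hs A)).add ((hcont hkp hs Aᶜ).div continuousOn_id hpos)

lemma modMean_one (hpsum : ∑' k, p k = 1) (hmean : Summable fun k : ℕ => (k : ℝ) * p k)
    (hA : 0 < genFun (A.indicator p) 1) : modMean p A 1 = ∑' k : ℕ, (k : ℝ) * p k := by
  have hG := genFun.indicator_add_compl (θ := 1)
    (by simpa using summable_of_tsum_ne_zero (hpsum ▸ one_ne_zero)) A
  have hH := genFun.indicator_add_compl (θ := 1) (by simpa using hmean) A
  rw [genFun.one (a := p), hpsum] at hG
  have hc : 1 - genFun (Aᶜ.indicator p) 1 = genFun (A.indicator p) 1 := by linarith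
  rw [← genFun.one, ← hH, modMean, cA_eq_genFun, one_mul, hc, div_self hA.ne', one_mul, div_one]

lemma one_le_modMean (hp : 0 ≤ p) (ht : 0 < t) (hs : Summable fun k : ℕ => (k : ℝ) * p k * t ^ k)
    (hG : genFun p t ≤ t) (hH : t ≤ genFun (fun k : ℕ => (k : ℝ) * p k) t)
    (hA : 0 < genFun (A.indicator p) t) : 1 ≤ modMean p A t := by
  have hkp := natCast_mul_nonneg hp
  have hG' := genFun.indicator_add_compl (genFun.summable_of_summable_natCast_mul hp ht.le hs) A
  have hH' := genFun.indicator_add_compl hs A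
  have hHA := genFun.nonneg (Set.indicator_nonneg (fun k _ => hkp k) (s := A)) ht.le
  have hGAc := genFun.nonneg (Set.indicator_nonneg (fun k _ => hp k) (s := Aᶜ)) ht.le
  have hc : 1 / t ≤ cA p A t := by
    rw [cA_eq_genFun, div_le_div_iff₀ ht (by positivity)]
    nlinarith
  rw [modMean]
  calc 1 ≤ (genFun (A.indicator fun k : ℕ => (k : ℝ) * p k) t
          + genFun (Aᶜ.indicator fun k : ℕ => (k : ℝ) * p k) t) / t := by
        rw [le_div_iff₀ ht]
        linarith
    _ = 1 / t * genFun (A.indicator fun k : ℕ => (k : ℝ) * p k) t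
          + genFun (Aᶜ.indicator fun k : ℕ => (k : ℝ) * p k) t / t := by ring
    _ ≤ _ := by gcongr

end Mean

section Generic

variable {p : ℕ → ℝ} {A : Set ℕ} {t : ℝ}

lemma genFun_le_self_of_fixedPoint (hp : 0 ≤ p) (hpsum : ∑' k, p k = 1) (ht : 1 ≤ t)
    (hs : Summable fun k : ℕ => (k : ℝ) * p k * t ^ k)
    (hH : genFun (fun k : ℕ => (k : ℝ) * p k) t = t) {θ : ℝ} (hθ : θ ∈ Icc 1 t) :
    genFun p θ ≤ θ := by
  have h1 : genFun p 1 = 1 := genFun.one.trans hpsum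
  have hGt : genFun p t ≤ t := by
    have := genFun.mul_sub_le hp zero_le_one ht hs
    rw [h1, hH] at this
    nlinarith
  have hconv := (genFun.convexOn hp (genFun.summable_of_summable_natCast_mul hp
    (zero_le_one.trans ht) hs)).sub (concaveOn_id (convex_Icc 0 t))
  have := hconv.le_on_segment ⟨zero_le_one, ht⟩ ⟨zero_le_one.trans ht, le_rfl⟩
    (by rwa [segment_eq_Icc ht])
  simp only [Pi.sub_apply, id, h1, sub_self] at this
  linarith [max_le le_rfl (sub_nonpos.2 hGt)]

lemma exists_generic_of_fixedPoint (hp : 0 ≤ p) (hpsum : ∑' k, p k = 1)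
    (hmean : Summable fun k : ℕ => (k : ℝ) * p k) (hsub : ∑' k : ℕ, (k : ℝ) * p k < 1)
    (hApos : 0 < ∑' k : ℕ, A.indicator p k) (ht : 1 ≤ t)
    (hs : Summable fun k : ℕ => (k : ℝ) * p k * t ^ k)
    (hH : genFun (fun k : ℕ => (k : ℝ) * p k) t = t) :
    ∃ θ ∈ IA p A, ∑' k : ℕ, (k : ℝ) * pMod p A θ k = 1 := by
  have hpos {θ : ℝ} (hθ : θ ∈ Icc 1 t) : 0 < θ := zero_lt_one.trans_le hθ.1
  have hsθ {θ : ℝ} (hθ : θ ∈ Icc 1 t) : Summable fun k : ℕ => (k : ℝ) * p k * θ ^ k :=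
    genFun.summable_of_le (natCast_mul_nonneg hp) le_rfl (hpos hθ).le hθ.2 hs
  have hA {θ : ℝ} (hθ : θ ∈ Icc 1 t) : 0 < genFun (A.indicator p) θ :=
    genFun_indicator_pos hp hApos (hpos hθ)
      (genFun.summable_of_summable_natCast_mul hp (hpos hθ).le (hsθ hθ))
  have h1 : (1 : ℝ) ∈ Icc 1 t := ⟨le_rfl, ht⟩
  have ht' : t ∈ Icc 1 t := ⟨ht, le_rfl⟩
  obtain ⟨θ, hθ, hθmean⟩ := intermediate_value_Icc ht
    (continuousOn_modMean hp (zero_le_one.trans ht) hs fun θ hθ => hA hθ)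
    ⟨((modMean_one hpsum hmean (hA h1)).trans_lt hsub).le,
      one_le_modMean hp (hpos ht') hs (genFun_le_self_of_fixedPoint hp hpsum ht hs hH ht')
        hH.ge (hA ht')⟩
  refine ⟨θ, mem_IA hp (hpos hθ)
    (genFun.summable_of_summable_natCast_mul hp (hpos hθ).le (hsθ hθ)) (hA hθ)
    (genFun_le_self_of_fixedPoint hp hpsum ht hs hH hθ), ?_⟩
  rwa [tsum_natCast_mul_pMod (hpos hθ).ne' (hsθ hθ)]

lemma exists_generic_of_le_genFun (hp : 0 ≤ p) (hpsum : ∑' k, p k = 1)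
    (hmean : Summable fun k : ℕ => (k : ℝ) * p k) (hsub : ∑' k : ℕ, (k : ℝ) * p k < 1)
    (hApos : 0 < ∑' k : ℕ, A.indicator p k) (ht : 1 ≤ t)
    (hs : Summable fun k : ℕ => (k : ℝ) * p k * t ^ k)
    (hH : t ≤ genFun (fun k : ℕ => (k : ℝ) * p k) t) :
    ∃ θ ∈ IA p A, ∑' k : ℕ, (k : ℝ) * pMod p A θ k = 1 := by
  have hkp := natCast_mul_nonneg hp
  have hH1 : genFun (fun k : ℕ => (k : ℝ) * p k) 1 - 1 ≤ 0 := by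
    rw [genFun.one]
    linarith
  obtain ⟨s, hs1, hfix⟩ := intermediate_value_Icc ht
    (((genFun.continuousOn hkp hs).mono (Icc_subset_Icc_left zero_le_one)).sub continuousOn_id)
    ⟨hH1, sub_nonneg.2 hH⟩
  exact exists_generic_of_fixedPoint hp hpsum hmean hsub hApos hs1.1
    (genFun.summable_of_le hkp le_rfl (zero_le_one.trans hs1.1) hs1.2 hs) (sub_eq_zero.1 hfix)

end Generic

section Crossing

variable {p : ℕ → ℝ}

lemma exists_two_le_pos (hp : 0 ≤ p) (hpsum : ∑' k, p k = 1) (hp01 : p 0 + p 1 < 1) :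
    ∃ m, 2 ≤ m ∧ 0 < p m := by
  by_contra! h
  have : ∑' k, p k = p 0 + p 1 := by
    rw [tsum_eq_sum (s := Finset.range 2) fun m hm =>
      le_antisymm (h m (by simp at hm; omega)) (hp m)]
    simp [Finset.sum_range_succ]
  linarith

lemma exists_le_genFun_natCast_mul_of_summable (hp : 0 ≤ p) (hpsum : ∑' k, p k = 1)
    (hp01 : p 0 + p 1 < 1) (hall : ∀ r : ℝ, Summable fun k : ℕ => p k * r ^ k) :
    ∃ t, 1 ≤ t ∧ (Summable fun k : ℕ => (k : ℝ) * p k * t ^ k) ∧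
      t ≤ genFun (fun k : ℕ => (k : ℝ) * p k) t := by
  obtain ⟨m, hm, hpm⟩ := exists_two_le_pos hp hpsum hp01
  set t := max 1 (p m)⁻¹
  have ht : 1 ≤ t := le_max_left _ _
  have hpmt : 1 ≤ p m * t := by
    rw [← mul_inv_cancel₀ hpm.ne']
    exact mul_le_mul_of_nonneg_left (le_max_right _ _) hpm.le
  have hs := genFun.summable_natCast_mul_of_lt hp (zero_le_one.trans ht) (lt_add_one t)
    (hall (t + 1))
  refine ⟨t, ht, hs, ?_⟩
  calc t ≤ p m * t * t := le_mul_of_one_le_left (zero_le_one.trans ht) hpmt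
    _ = 1 * p m * t ^ 2 := by ring
    _ ≤ m * p m * t ^ m := by
      gcongr
      exact_mod_cast one_le_two.trans hm
    _ ≤ _ := hs.le_tsum m fun k _ =>
      mul_nonneg (mul_nonneg k.cast_nonneg (hp k)) (pow_nonneg (zero_le_one.trans ht) k)

lemma natCast_mul_mul_pow_eq {ρ : ℝ} (k : ℕ) :
    (k : ℝ) * p k * ρ ^ k = ρ * ((k : ℝ) * p k * ρ ^ (k - 1)) := by
  cases k with
  | zero => simp
  | succ n => rw [Nat.add_sub_cancel, pow_succ]; ring

lemma exists_le_genFun_natCast_mul_of_radius (hp : 0 ≤ p) (hsp : Summable p)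
    (hmean : Summable fun k : ℕ => (k : ℝ) * p k) {ρ : ℝ} (hρ : 0 < ρ)
    (hlt : ∀ r : ℝ, 0 ≤ r → r < ρ → Summable fun k : ℕ => p k * r ^ k)
    (hgt : ∀ r : ℝ, ρ < r → ¬ Summable fun k : ℕ => p k * r ^ k)
    (hρ' : ¬ Summable (fun k : ℕ => (k : ℝ) * p k * ρ ^ (k - 1))
      ∨ 1 ≤ ∑' k : ℕ, (k : ℝ) * p k * ρ ^ (k - 1)) :
    ∃ t, 1 ≤ t ∧ (Summable fun k : ℕ => (k : ℝ) * p k * t ^ k) ∧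
      t ≤ genFun (fun k : ℕ => (k : ℝ) * p k) t := by
  have hρ1 : 1 ≤ ρ := not_lt.1 fun h => hgt 1 h (by simpa using hsp)
  have hshift : (Summable fun k : ℕ => (k : ℝ) * p k * ρ ^ k) ↔
      Summable fun k : ℕ => (k : ℝ) * p k * ρ ^ (k - 1) := by
    simp only [natCast_mul_mul_pow_eq (ρ := ρ)]
    exact summable_mul_left_iff hρ.ne'
  rcases hρ' with hns | hge
  · obtain rfl | hρ1 := hρ1.eq_or_lt
    · simp [hmean] at hns
    have hsr {r : ℝ} (hr : r ∈ Ioo 1 ρ) : Summable fun k : ℕ => (k : ℝ) * p k * r ^ k := by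
      obtain ⟨u, hru, huρ⟩ := exists_between hr.2
      have hr0 : 0 ≤ r := zero_le_one.trans hr.1.le
      exact genFun.summable_natCast_mul_of_lt hp hr0 hru (hlt u (hr0.trans hru.le) huρ)
    by_contra! hno
    exact hns (hshift.1 (genFun.summable_of_le_on_Ioo (C := ρ)
      (natCast_mul_nonneg hp) zero_le_one hρ1
      fun r hr => ⟨hsr hr, ((hno r hr.1.le (hsr hr)).trans hr.2).le⟩))
  · have hs' : Summable fun k : ℕ => (k : ℝ) * p k * ρ ^ (k - 1) := by
      by_contra h
      rw [tsum_eq_zero_of_not_summable h] at hge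
      norm_num at hge
    refine ⟨ρ, hρ1, hshift.2 hs', ?_⟩
    calc ρ ≤ ρ * ∑' k : ℕ, (k : ℝ) * p k * ρ ^ (k - 1) := le_mul_of_one_le_right hρ.le hge
      _ = _ := by simp only [genFun, natCast_mul_mul_pow_eq (ρ := ρ), tsum_mul_left]

end Crossing

theorem stmt6_general (p : ℕ → ℝ) (A : Set ℕ)
    (hp : ∀ k, 0 ≤ p k) (hpsum : ∑' k, p k = 1)
    (hp01 : p 0 + p 1 < 1)
    (hmean : Summable (fun k : ℕ => (k : ℝ) * p k))
    (hsub : ∑' k : ℕ, (k : ℝ) * p k < 1)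
    (hApos : 0 < ∑' k : ℕ, A.indicator p k)
    -- either the radius of convergence `ρ` of the generating function is `+∞`,
    -- or it is finite and `g'(ρ) ≥ 1` (possibly `g'(ρ) = +∞`).
    (hrad : (∀ r : ℝ, Summable (fun k : ℕ => p k * r ^ k))
      ∨ (∃ ρ : ℝ, 0 < ρ
          ∧ (∀ r : ℝ, 0 ≤ r → r < ρ → Summable (fun k : ℕ => p k * r ^ k))
          ∧ (∀ r : ℝ, ρ < r → ¬ Summable (fun k : ℕ => p k * r ^ k))
          ∧ (¬ Summable (fun k : ℕ => (k : ℝ) * p k * ρ ^ (k - 1))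
              ∨ 1 ≤ ∑' k : ℕ, (k : ℝ) * p k * ρ ^ (k - 1)))) :
    -- `p` is generic for `A`
    ∃ θ ∈ IA p A, (∑' k : ℕ, (k : ℝ) * pMod p A θ k) = 1 := by
  have hsp : Summable p := summable_of_tsum_ne_zero (hpsum ▸ one_ne_zero)
  obtain ⟨t, ht, hs, hH⟩ : ∃ t, 1 ≤ t ∧ (Summable fun k : ℕ => (k : ℝ) * p k * t ^ k) ∧
      t ≤ genFun (fun k : ℕ => (k : ℝ) * p k) t := by
    rcases hrad with hall | ⟨ρ, hρ, hlt, hgt, hρ'⟩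
    · exact exists_le_genFun_natCast_mul_of_summable hp hpsum hp01 hall
    · exact exists_le_genFun_natCast_mul_of_radius hp hsp hmean hρ hlt hgt hρ'
  exact exists_generic_of_le_genFun hp hpsum hmean hsub hApos ht hs hH

theorem stmt6 (p : ℕ → ℝ) (A : Set ℕ)
    (hp : ∀ k, 0 ≤ p k) (hpsum : ∑' k, p k = 1)
    (hp0 : 0 < p 0) (hp01 : p 0 + p 1 < 1)
    (hmean : Summable (fun k : ℕ => (k : ℝ) * p k))
    (hsub : ∑' k : ℕ, (k : ℝ) * p k < 1)
    (hApos : 0 < ∑' k : ℕ, A.indicator p k)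
    -- either the radius of convergence `ρ` of the generating function is `+∞`,
    -- or it is finite and `g'(ρ) ≥ 1` (possibly `g'(ρ) = +∞`).
    (hrad : (∀ r : ℝ, Summable (fun k : ℕ => p k * r ^ k))
      ∨ (∃ ρ : ℝ, 0 < ρ
          ∧ (∀ r : ℝ, 0 ≤ r → r < ρ → Summable (fun k : ℕ => p k * r ^ k))
          ∧ (∀ r : ℝ, ρ < r → ¬ Summable (fun k : ℕ => p k * r ^ k))
          ∧ (¬ Summable (fun k : ℕ => (k : ℝ) * p k * ρ ^ (k - 1))
              ∨ 1 ≤ ∑' k : ℕ, (k : ℝ) * p k * ρ ^ (k - 1)))) :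
    -- `p` is generic for `A`
    ∃ θ ∈ IA p A, (∑' k : ℕ, (k : ℝ) * pMod p A θ k) = 1 :=
  stmt6_general p A hp hpsum hp01 hmean hsub hApos hrad
end

section
/- Dwass formula consequence: let τ be a Galton–Watson tree with offspring distribution p on ℕ (subcritical or critical so that τ is a.s. finite), let (X_i) be i.i.d. with law p and S_n=Σ_{i=1}^n X_i. Then for every k∈ℕ* and n≥k, the probability that a forest of k i.i.d. GW(p) trees has total size n equals (k/n)·P(S_n = n−k). -/
/-- `walk p n m = P(S_n = m)` for the random walk with i.i.d. steps of law `p`. -/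
noncomputable def walk (p : ℕ → ℝ) : ℕ → ℕ → ℝ
  | 0, m => if m = 0 then 1 else 0
  | n + 1, m => ∑ j ∈ Finset.range (m + 1), p j * walk p n (m - j)

/-- `walkZ p n m`, allowing an integer target (zero for negative targets). -/
noncomputable def walkZ (p : ℕ → ℝ) (n : ℕ) (m : ℤ) : ℝ :=
  if 0 ≤ m then walk p n m.toNat else 0

/-- Version allowing an integer number of steps. -/
noncomputable def walkZZ (p : ℕ → ℝ) (n m : ℤ) : ℝ :=
  if 0 ≤ n then walkZ p n.toNat m else 0

/-- Finite rooted ordered trees. -/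
inductive GWT where
  | node : List GWT → GWT

/-- Number of vertices of a finite tree. -/
def GWT.size : GWT → ℕ
  | .node cs => 1 + (cs.attach.map (fun c => GWT.size c.1)).sum
decreasing_by
  have := List.sizeOf_lt_of_mem c.2
  simp only [GWT.node.sizeOf_spec] at *
  omega

/-- The Galton–Watson weight `∏_{u ∈ t} p(k_u(t))` of a finite tree,
i.e. `P(τ = t)` for a GW tree `τ` with offspring distribution `p`. -/
noncomputable def GWT.wt (p : ℕ → ℝ) : GWT → ℝ
  | .node cs => p cs.length * (cs.attach.map (fun c => GWT.wt p c.1)).prod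
decreasing_by
  have := List.sizeOf_lt_of_mem c.2
  simp only [GWT.node.sizeOf_spec] at *
  omega

/-- `P_k(|forest| = n)`: probability that a forest of `k` i.i.d. GW(p) trees
has total progeny `n`. -/
noncomputable def forestProb (p : ℕ → ℝ) (k n : ℕ) : ℝ :=
  ∑' f : {l : List GWT // l.length = k ∧ (l.map GWT.size).sum = n},
    ((f : List GWT).map (GWT.wt p)).prod

/-!
Deleting the root of the first tree turns a forest of `k + 1` trees and `n + 1` vertices into a
forest of `k + j` trees and `n` vertices, `j` being the degree of that root, and divides the weight
by `p j`; hence `F(k + 1, n + 1) = ∑ⱼ p j * F(k + j, n)` for `F = forestProb p`. The right-hand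
side `k / n * P(Sₙ = n - k)` satisfies the same recursion because of the exchangeability identity
`m * P(Sₙ₊₁ = m) = (n + 1) * E[X₁; Sₙ₊₁ = m]`, which is the coefficient of `X^m` in
`X (Pⁿ⁺¹)' = (n + 1) Pⁿ X P'` for the generating function `P` of `p`.
-/
open PowerSeries

namespace GWT

lemma size_node (cs : List GWT) : (node cs).size = 1 + (cs.map size).sum := by
  rw [size, List.attach_map_val]

lemma wt_node (p : ℕ → ℝ) (cs : List GWT) :
    (node cs).wt p = p cs.length * (cs.map (wt p)).prod := by
  rw [wt, List.attach_map_val]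

lemma one_le_size (t : GWT) : 1 ≤ t.size := by
  cases t with
  | node cs => rw [size_node]; omega

lemma length_le_sum_size (l : List GWT) : l.length ≤ (l.map size).sum := by
  simpa using List.length_le_sum_of_one_le (l.map size) (by simpa using fun t _ => one_le_size t)

end GWT

abbrev Forest (k n : ℕ) : Type := {l : List GWT // l.length = k ∧ (l.map GWT.size).sum = n}

namespace Forest

open GWT

def removeRoot {k n : ℕ} : Forest (k + 1) (n + 1) → Σ j : Fin (n + 1), Forest (k + j) n
  | ⟨[], h⟩ => absurd h.1 (by simp)
  | ⟨node cs :: rest, h⟩ =>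
    ⟨⟨cs.length, by
        simp only [List.map_cons, List.sum_cons, size_node] at h
        have := length_le_sum_size cs
        omega⟩,
      ⟨cs ++ rest, by simp at h ⊢; omega, by simp [size_node] at h ⊢; omega⟩⟩

def graftRoot {k n : ℕ} : (Σ j : Fin (n + 1), Forest (k + j) n) → Forest (k + 1) (n + 1)
  | ⟨j, l, h⟩ =>
    ⟨node (l.take j) :: l.drop j, by simp; omega, by
      have := List.sum_take_add_sum_drop (l.map size) j
      simp only [List.map_cons, List.sum_cons, size_node, List.map_take, List.map_drop]
      omega⟩

def rootEquiv (k n : ℕ) : Forest (k + 1) (n + 1) ≃ Σ j : Fin (n + 1), Forest (k + j) n where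
  toFun := removeRoot
  invFun := graftRoot
  left_inv := by
    rintro ⟨_ | ⟨⟨cs⟩, rest⟩, h⟩
    · simp at h
    · exact Subtype.ext (by simp [removeRoot, graftRoot])
  right_inv := by
    rintro ⟨j, l, hl, hs⟩
    have hj : (j : ℕ) ≤ l.length := by omega
    exact Sigma.subtype_ext (Fin.ext (by simp [removeRoot, graftRoot, hj]))
      (by simp [removeRoot, graftRoot])

lemma wt_removeRoot (p : ℕ → ℝ) {k n : ℕ} (f : Forest (k + 1) (n + 1)) :
    (f.1.map (wt p)).prod = p (removeRoot f).1 * ((removeRoot f).2.1.map (wt p)).prod := by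
  rcases f with ⟨_ | ⟨⟨cs⟩, rest⟩, h⟩
  · simp at h
  · simp [removeRoot, wt_node, mul_assoc]

instance finite : ∀ k n : ℕ, Finite (Forest k n)
  | k, 0 => by
    refine @Finite.of_subsingleton _ ⟨fun ⟨l, hl⟩ ⟨l', hl'⟩ => ?_⟩
    obtain rfl : l = [] := List.length_eq_zero_iff.mp (by have := length_le_sum_size l; omega)
    obtain rfl : l' = [] := List.length_eq_zero_iff.mp (by have := length_le_sum_size l'; omega)
    rfl
  | 0, n + 1 => by
    refine @Finite.of_subsingleton _ ⟨fun ⟨l, hl⟩ => ?_⟩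
    simp_all [List.length_eq_zero_iff]
  | k + 1, n + 1 =>
    have := fun j : Fin (n + 1) => finite (k + j) n
    Finite.of_equiv _ (rootEquiv k n).symm

noncomputable instance (k n : ℕ) : Fintype (Forest k n) := Fintype.ofFinite _

end Forest

open Forest

lemma forestProb_eq_sum (p : ℕ → ℝ) (k n : ℕ) :
    forestProb p k n = ∑ f : Forest k n, (f.1.map (GWT.wt p)).prod :=
  tsum_fintype _

lemma forestProb_zero_zero (p : ℕ → ℝ) : forestProb p 0 0 = 1 := by
  let _ : Unique (Forest 0 0) :=
    ⟨⟨⟨[], rfl, rfl⟩⟩, fun f => Subtype.ext (List.length_eq_zero_iff.mp f.2.1)⟩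
  rw [forestProb_eq_sum, Fintype.sum_unique]
  rfl

lemma forestProb_zero_succ (p : ℕ → ℝ) (n : ℕ) : forestProb p 0 (n + 1) = 0 := by
  have : IsEmpty (Forest 0 (n + 1)) :=
    ⟨fun ⟨l, hl, hs⟩ => by simp [List.length_eq_zero_iff.mp hl] at hs⟩
  simp [forestProb_eq_sum]

lemma forestProb_of_lt (p : ℕ → ℝ) {k n : ℕ} (h : n < k) : forestProb p k n = 0 := by
  have : IsEmpty (Forest k n) :=
    ⟨fun ⟨l, hl, hs⟩ => by have := GWT.length_le_sum_size l; omega⟩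
  simp [forestProb_eq_sum]

lemma forestProb_succ_succ (p : ℕ → ℝ) (k n : ℕ) :
    forestProb p (k + 1) (n + 1) = ∑ j ∈ Finset.range (n + 1), p j * forestProb p (k + j) n := by
  calc forestProb p (k + 1) (n + 1)
      = ∑ s : Σ j : Fin (n + 1), Forest (k + j) n, p s.1 * (s.2.1.map (GWT.wt p)).prod := by
        rw [forestProb_eq_sum]
        exact Fintype.sum_equiv (rootEquiv k n) _ _ (wt_removeRoot p)
    _ = ∑ j : Fin (n + 1), p j * forestProb p (k + j) n := by
        simp only [Fintype.sum_sigma, forestProb_eq_sum, Finset.mul_sum]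
    _ = _ := Fin.sum_univ_eq_sum_range (fun j => p j * forestProb p (k + j) n) (n + 1)

lemma PowerSeries.coeff_X_mul_derivative {R : Type*} [CommSemiring R] (f : R⟦X⟧) (m : ℕ) :
    coeff m (X * d⁄dX R f) = m * coeff m f := by
  cases m with
  | zero => simp
  | succ m => rw [coeff_succ_X_mul, coeff_derivative, mul_comm]; push_cast; rfl

lemma walk_eq_coeff (p : ℕ → ℝ) (n m : ℕ) : walk p n m = coeff m (mk p ^ n) := by
  induction n generalizing m with
  | zero => simp [walk, coeff_one]
  | succ n ih =>
    rw [walk, pow_succ', coeff_mul, Finset.Nat.sum_antidiagonal_eq_sum_range_succ_mk]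
    simp [ih]

lemma cast_mul_walk_succ (p : ℕ → ℝ) (n m : ℕ) :
    (m : ℝ) * walk p (n + 1) m
      = (n + 1) * ∑ j ∈ Finset.range (m + 1), j * p j * walk p n (m - j) := by
  calc (m : ℝ) * walk p (n + 1) m = coeff m (X * d⁄dX ℝ (mk p ^ (n + 1))) := by
        rw [coeff_X_mul_derivative, walk_eq_coeff]
    _ = coeff m (C ((n + 1 : ℕ) : ℝ) * ((X * d⁄dX ℝ (mk p)) * mk p ^ n)) := by
        rw [derivative_pow, map_natCast, Nat.add_sub_cancel]
        ac_rfl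
    _ = _ := by
        rw [coeff_C_mul, Nat.cast_succ, coeff_mul, Finset.Nat.sum_antidiagonal_eq_sum_range_succ_mk]
        simp [coeff_X_mul_derivative, walk_eq_coeff, mul_assoc]

theorem forestProb_eq_div_mul_walk (p : ℕ → ℝ) {k n : ℕ} (hn : 0 < n) (hk : k ≤ n) :
    forestProb p k n = k / n * walk p n (n - k) := by
  induction n, hn using Nat.le_induction generalizing k with
  | base =>
    interval_cases k
    · simp [forestProb_zero_succ]
    · simp [forestProb_succ_succ, forestProb_zero_zero, walk]
  | succ n hn ih =>
    cases k with
    | zero => simp [forestProb_zero_succ]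
    | succ k =>
      obtain ⟨m, rfl⟩ : ∃ m, n = k + m := ⟨n - k, by omega⟩
      have hsub : Finset.range (m + 1) ⊆ Finset.range (k + m + 1) :=
        Finset.range_subset_range.mpr (by omega)
      have hkm : (k : ℝ) + m ≠ 0 := by norm_cast; omega
      set A := walk p (k + m + 1) m
      set B := ∑ j ∈ Finset.range (m + 1), j * p j * walk p (k + m) (m - j)
      have hB : m * A = (k + m + 1) * B := by simpa using cast_mul_walk_succ p (k + m) m
      calc forestProb p (k + 1) (k + m + 1)
          = ∑ j ∈ Finset.range (m + 1), p j * forestProb p (k + j) (k + m) := by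
            rw [forestProb_succ_succ]
            refine (Finset.sum_subset hsub fun j _ hj => ?_).symm
            rw [forestProb_of_lt p (by simp at hj; omega), mul_zero]
        _ = ∑ j ∈ Finset.range (m + 1), p j * ((k + j) / (k + m) * walk p (k + m) (m - j)) := by
            refine Finset.sum_congr rfl fun j hj => ?_
            rw [ih (by simp at hj; omega), show k + m - (k + j) = m - j by omega, Nat.cast_add,
              Nat.cast_add]
        _ = (k * A + B) / (k + m) := by
            simp only [A, B, walk, Finset.mul_sum, ← Finset.sum_add_distrib, Finset.sum_div]
            refine Finset.sum_congr rfl fun j _ => ?_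
            field_simp
        _ = ((k + 1 : ℕ) : ℝ) / ((k + m + 1 : ℕ) : ℝ)
              * walk p (k + m + 1) (k + m + 1 - (k + 1)) := by
            rw [show k + m + 1 - (k + 1) = m by omega]
            push_cast
            field_simp
            linear_combination -hB

theorem stmt15_general (p : ℕ → ℝ) :
    ∀ k n : ℕ, 1 ≤ k → k ≤ n →
      forestProb p k n = ((k : ℝ) / n) * walk p n (n - k) :=
  fun _ _ hk hkn => forestProb_eq_div_mul_walk p (by omega) hkn

theorem stmt15 (p : ℕ → ℝ)
    (hp : ∀ k, 0 ≤ p k) (hpsum : ∑' k, p k = 1)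
    (hp0 : 0 < p 0)
    (hmean : Summable (fun k : ℕ => (k : ℝ) * p k))
    (hμle : ∑' k : ℕ, (k : ℝ) * p k ≤ 1) :
    ∀ k n : ℕ, 1 ≤ k → k ≤ n →
      forestProb p k n = ((k : ℝ) / n) * walk p n (n - k) :=
  stmt15_general p
end
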